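/- arXiv:1308.6205 — 3 statements merged into one kernel-verified Lean document; each statement's English description precedes it below -/
import Mathlib

section
/- Let λ>1, A = diag(λ², λ), B = A^{-T}, E = [[0,1],[1,0]], and Λ := ⋃_{j=0}^∞ (A^j ℤ² ∪ E A^j ℤ²). Then for every k ∈ Λ \ {0}, the set { j ∈ ℤ : j ≥ 0 and (B^j k ∈ ℤ² or B^j E k ∈ ℤ²) } is finite. -/
open Matrix

lemma diag_pow' (a b : ℝ) (j : ℕ) :
    (!![a, 0; 0, b]) ^ j = !![a ^ j, 0; 0, b ^ j] := by
  induction j with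
  | zero => simp [Matrix.one_fin_two]
  | succ n ih =>
    rw [pow_succ, ih]
    ext i j
    fin_cases i <;> fin_cases j <;>
      simp [Matrix.mul_apply, Fin.sum_univ_two, pow_succ]

lemma mulVec2' (a b : ℝ) (w : Fin 2 → ℝ) :
    (!![a, 0; 0, b]).mulVec w = ![a * w 0, b * w 1] := by
  funext i
  fin_cases i <;> simp [Matrix.mulVec, dotProduct, Fin.sum_univ_two]

lemma Emul' (w : Fin 2 → ℝ) : (!![(0:ℝ),1;1,0]).mulVec w = ![w 1, w 0] := by
  funext i
  fin_cases i <;> simp [Matrix.mulVec, dotProduct, Fin.sum_univ_two]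

lemma key' (lam : ℝ) (hlam : 1 < lam) (v : ℤ) (hv : v ≠ 0) (n P Q : ℕ)
    (hn : |(v : ℝ)| < lam ^ n) (hPQ : P + n ≤ Q) (m : ℤ)
    (hm : (lam ^ Q)⁻¹ * (lam ^ P * (v : ℝ)) = m) : False := by
  have hl0 : (0:ℝ) < lam := lt_trans one_pos hlam
  have hvne : ((v : ℝ)) ≠ 0 := Int.cast_ne_zero.mpr hv
  have hxne : (lam ^ Q)⁻¹ * (lam ^ P * (v : ℝ)) ≠ 0 := by
    positivity
  have habs : |(lam ^ Q)⁻¹ * (lam ^ P * (v : ℝ))| < 1 := by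
    rw [abs_mul, abs_mul, abs_inv, abs_pow, abs_pow, abs_of_pos hl0]
    have hQ : lam ^ P * lam ^ n ≤ lam ^ Q := by
      rw [← pow_add]
      exact pow_le_pow_right₀ hlam.le hPQ
    rw [inv_mul_eq_div, div_lt_one (by positivity)]
    calc lam ^ P * |(v:ℝ)| < lam ^ P * lam ^ n := by
          exact (mul_lt_mul_iff_right₀ (by positivity)).mpr hn
      _ ≤ lam ^ Q := hQ
  rw [hm] at hxne habs
  have : m = 0 := by
    have := abs_lt.mp habs
    have h1 : (m:ℝ) < 1 := this.2
    have h2 : (-1:ℝ) < m := this.1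
    have h1' : m < 1 := by exact_mod_cast h1
    have h2' : (-1:ℤ) < m := by exact_mod_cast h2
    omega
  simp [this] at hxne

/-- For every nonzero `k` in the lattice `Λ`, there are only finitely many `j ≥ 0`
with `Bʲk ∈ ℤ²` or `BʲEk ∈ ℤ²`. -/
theorem finitely_many_integer_images (lam : ℝ) (hlam : 1 < lam)
    (A B E : Matrix (Fin 2) (Fin 2) ℝ)
    (hA : A = !![lam ^ 2, 0; 0, lam])
    (hB : B = !![(lam ^ 2)⁻¹, 0; 0, lam⁻¹])
    (hE : E = !![0, 1; 1, 0])
    (Λ : Set (Fin 2 → ℝ))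
    (hΛ : Λ = ⋃ j : ℕ, {x | ∃ k : Fin 2 → ℤ,
      x = (A ^ j).mulVec (fun i => (k i : ℝ)) ∨
      x = (E * A ^ j).mulVec (fun i => (k i : ℝ))}) :
    ∀ k ∈ Λ, k ≠ 0 →
      {j : ℕ | (∃ m : Fin 2 → ℤ, (B ^ j).mulVec k = fun i => (m i : ℝ)) ∨
        ∃ m : Fin 2 → ℤ, (B ^ j).mulVec (E.mulVec k) = fun i => (m i : ℝ)}.Finite := by
  subst hA hB hE hΛ
  intro k hk hk0
  simp only [Set.mem_iUnion, Set.mem_setOf_eq] at hk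
  obtain ⟨j₀, k₀, hkc⟩ := hk
  have hl0 : (0:ℝ) < lam := lt_trans one_pos hlam
  have hex : ∃ i, k₀ i ≠ 0 := by
    by_contra h
    push_neg at h
    have hv0 : (fun i => ((k₀ i : ℝ))) = 0 := by funext i; simp [h i]
    apply hk0
    rcases hkc with h1 | h1 <;> rw [h1, hv0, Matrix.mulVec_zero]
  obtain ⟨i, hi⟩ := hex
  obtain ⟨n, hn⟩ := pow_unbounded_of_one_lt (|(k₀ i : ℝ)|) hlam
  apply Set.Finite.subset (Set.finite_Iio (2 * j₀ + n))
  intro j hj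
  simp only [Set.mem_setOf_eq] at hj
  by_contra hjlt
  simp only [Set.mem_Iio, not_lt] at hjlt
  -- compute matrices
  have hAj : (!![lam ^ 2, 0; 0, lam] : Matrix (Fin 2) (Fin 2) ℝ) ^ j₀
      = !![lam ^ (2 * j₀), 0; 0, lam ^ j₀] := by
    rw [diag_pow', ← pow_mul]
  have hBj : (!![(lam ^ 2)⁻¹, 0; 0, lam⁻¹] : Matrix (Fin 2) (Fin 2) ℝ) ^ j
      = !![(lam ^ (2 * j))⁻¹, 0; 0, (lam ^ j)⁻¹] := by
    rw [diag_pow', inv_pow, inv_pow, ← pow_mul]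
  set v : Fin 2 → ℝ := fun i => ((k₀ i : ℝ)) with hv
  -- the two possible k's, componentwise
  have hk1 : (!![lam ^ 2, 0; 0, lam] ^ j₀).mulVec v
      = ![lam ^ (2 * j₀) * v 0, lam ^ j₀ * v 1] := by
    rw [hAj, mulVec2']
  have hk2 : (!![(0:ℝ), 1; 1, 0] * !![lam ^ 2, 0; 0, lam] ^ j₀).mulVec v
      = ![lam ^ j₀ * v 1, lam ^ (2 * j₀) * v 0] := by
    rw [← Matrix.mulVec_mulVec, hk1, Emul']
    simp
  fin_cases i
  · -- v 0 ≠ 0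
    rcases hkc with h1 | h1 <;> rw [h1] at hj
    · rcases hj with ⟨m, hm⟩ | ⟨m, hm⟩
      · rw [hk1, hBj, mulVec2'] at hm
        have := congrFun hm 0
        simp at this
        exact key' lam hlam (k₀ 0) hi n (2 * j₀) (2 * j) hn (by omega) (m 0) this
      · rw [hk1, Emul', hBj, mulVec2'] at hm
        have := congrFun hm 1
        simp at this
        exact key' lam hlam (k₀ 0) hi n (2 * j₀) j hn (by omega) (m 1) this
    · rcases hj with ⟨m, hm⟩ | ⟨m, hm⟩
      · rw [hk2, hBj, mulVec2'] at hm
        have := congrFun hm 1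
        simp at this
        exact key' lam hlam (k₀ 0) hi n (2 * j₀) j hn (by omega) (m 1) this
      · rw [hk2, Emul', hBj, mulVec2'] at hm
        have := congrFun hm 0
        simp at this
        exact key' lam hlam (k₀ 0) hi n (2 * j₀) (2 * j) hn (by omega) (m 0) this
  · -- v 1 ≠ 0
    rcases hkc with h1 | h1 <;> rw [h1] at hj
    · rcases hj with ⟨m, hm⟩ | ⟨m, hm⟩
      · rw [hk1, hBj, mulVec2'] at hm
        have := congrFun hm 1
        simp at this
        exact key' lam hlam (k₀ 1) hi n j₀ j hn (by omega) (m 1) this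
      · rw [hk1, Emul', hBj, mulVec2'] at hm
        have := congrFun hm 0
        simp at this
        exact key' lam hlam (k₀ 1) hi n j₀ (2 * j) hn (by omega) (m 0) this
    · rcases hj with ⟨m, hm⟩ | ⟨m, hm⟩
      · rw [hk2, hBj, mulVec2'] at hm
        have := congrFun hm 0
        simp at this
        exact key' lam hlam (k₀ 1) hi n j₀ (2 * j) hn (by omega) (m 0) this
      · rw [hk2, Emul', hBj, mulVec2'] at hm
        have := congrFun hm 1
        simp at this
        exact key' lam hlam (k₀ 1) hi n j₀ j hn (by omega) (m 1) this
end

section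
/- Let λ>1 be an integer, j ≥ 0, ℓ ∈ ℤ. Let D_λ := diag(1, λ), S^ℓ := [[1,ℓ],[0,1]], S_ℓ := (S^ℓ)^T, B := diag(λ^{-2}, λ^{-1}), N := λ^{-2}I₂. Suppose ψ̃, ψ : ℝ² → ℂ are measurable with ψ(ξ) = ψ̃(D_λ^{-j} S_{-ℓ} ξ) for all ξ. Then for every k ∈ ℤ², |det(S_ℓ B^j)|^{1/2} ψ(S_ℓ B^j ξ) e^{-i k·S_ℓ B^j ξ} = λ^{j/2} |det N^j|^{1/2} ψ̃(N^j ξ) e^{-i (D_λ^j S^ℓ k)·N^j ξ}, i.e., ψ_{S_ℓ B^j; 0, k} = λ^{j/2} ψ̃_{N^j; 0, D_λ^j S^ℓ k}. Moreover D_λ^j S^ℓ ℤ² ⊆ ℤ². -/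
open Matrix

/-! With `A = S_ℓ D_λ^j` one has `S_ℓ B^j = A N^j` and `ψ = ψ̃ ∘ A⁻¹`. In the atom of `S_ℓ B^j`
the factor `A` therefore cancels against `A⁻¹` inside `ψ̃`, reappears as `|det A|^{1/2} = λ^{j/2}`
in the normalisation, and moves to the frequency through `k · A N^j ξ = Aᵀk · N^j ξ`, where
`Aᵀ = D_λ^j S^ℓ = [[1, ℓ], [0, λ^j]]` is an integer matrix. -/

/-- The paper's `f_{U;0,k}`. -/
noncomputable def affineAtom {n : Type*} [Fintype n] [DecidableEq n]
    (f : (n → ℝ) → ℂ) (U : Matrix n n ℝ) (k ξ : n → ℝ) : ℂ :=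
  (Real.sqrt |U.det| : ℂ) * f (U *ᵥ ξ) * Complex.exp (-Complex.I * ((k ⬝ᵥ (U *ᵥ ξ) : ℝ) : ℂ))

theorem affineAtom_mul {n : Type*} [Fintype n] [DecidableEq n]
    (f g : (n → ℝ) → ℂ) (A V : Matrix n n ℝ) (hfg : ∀ η, f (A *ᵥ η) = g η) (k ξ : n → ℝ) :
    affineAtom f (A * V) k ξ = Real.sqrt |A.det| * affineAtom g V (Aᵀ *ᵥ k) ξ := by
  simp only [affineAtom, det_mul, abs_mul, Real.sqrt_mul (abs_nonneg _), ← mulVec_mulVec, hfg,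
    dotProduct_mulVec, mulVec_transpose]
  push_cast
  ring

theorem mulVec_intCast {R m n : Type*} [Ring R] [Fintype n] (M : Matrix m n ℤ) (k : n → ℤ) :
    M.map ((↑) : ℤ → R) *ᵥ (fun i => (k i : R)) = fun i => ((M *ᵥ k) i : R) := by
  ext i
  exact ((Int.castRingHom R).map_mulVec M k i).symm

theorem transpose_fin_two_of {R : Type*} (a b c d : R) : !![a, b; c, d]ᵀ = !![a, c; b, d] := by
  ext i j; fin_cases i <;> fin_cases j <;> rfl

theorem diag_fin_two_pow {R : Type*} [CommSemiring R] (a b : R) (j : ℕ) :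
    !![a, 0; 0, b] ^ j = !![a ^ j, 0; 0, b ^ j] := by
  simpa [diagonal_fin_two] using diagonal_pow ![a, b] j

section ShearDilation

variable {R : Type*} (a ℓ : R) (j : ℕ)

theorem shear_mul_diag_pow_det [CommRing R] :
    (!![1, 0; ℓ, 1] * !![1, 0; 0, a] ^ j).det = a ^ j := by
  rw [det_mul, det_pow, det_fin_two_of, det_fin_two_of]
  ring

theorem shear_mul_diag_pow_transpose [CommRing R] :
    (!![1, 0; ℓ, 1] * !![1, 0; 0, a] ^ j)ᵀ = !![1, 0; 0, a] ^ j * !![1, ℓ; 0, 1] := by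
  rw [transpose_mul, transpose_pow, transpose_fin_two_of, transpose_fin_two_of]

variable [Field R] {a}

theorem shear_mul_parabolic_pow_factor :
    !![1, 0; ℓ, 1] * !![(a ^ 2)⁻¹, 0; 0, a⁻¹] ^ j =
      (!![1, 0; ℓ, 1] * !![1, 0; 0, a] ^ j) * !![(a ^ 2)⁻¹, 0; 0, (a ^ 2)⁻¹] ^ j := by
  rw [mul_assoc, diag_fin_two_pow, diag_fin_two_pow, diag_fin_two_pow]
  congr 1
  rw [mul_fin_two]
  simp only [one_pow, one_mul, mul_zero, zero_mul, add_zero, zero_add, ← mul_pow]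
  field_simp

theorem shear_mul_diag_pow_inv_mul_cancel (ha : a ≠ 0) :
    !![1, 0; 0, a⁻¹] ^ j * !![1, 0; -ℓ, 1] * (!![1, 0; ℓ, 1] * !![1, 0; 0, a] ^ j) = 1 := by
  have hS : !![1, 0; -ℓ, 1] * !![1, 0; ℓ, 1] = (1 : Matrix (Fin 2) (Fin 2) R) := by
    rw [mul_fin_two, one_fin_two]; simp
  rw [mul_assoc, ← mul_assoc !![1, 0; -ℓ, 1], hS, one_mul, diag_fin_two_pow, diag_fin_two_pow,
    mul_fin_two, one_fin_two]
  simp [ha]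

end ShearDilation

theorem intCast_diag_pow_mul_shear {R : Type*} [CommRing R] (n ℓ : ℤ) (j : ℕ) :
    !![1, 0; 0, (n : R)] ^ j * !![1, (ℓ : R); 0, 1] =
      (!![1, ℓ; 0, n ^ j] : Matrix (Fin 2) (Fin 2) ℤ).map (↑) := by
  rw [diag_fin_two_pow, mul_fin_two]
  ext i j; fin_cases i <;> fin_cases j <;> simp

/-- For integer `λ > 1`, each sheared atom `ψ_{S_ℓ B^j;0,k}` equals
`λ^{j/2} ψ̃_{N^j;0,D_λ^j S^ℓ k}`, and `D_λ^j S^ℓ ℤ² ⊆ ℤ²`; i.e. the affine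
shear tight frame is a subsampled directional framelet. -/
theorem shear_subsampled_framelet
    (lamZ : ℤ) (hlamZ : 1 < lamZ) (lam : ℝ) (hlam : lam = (lamZ : ℝ))
    (j : ℕ) (ℓ : ℤ)
    (Dlam Sup Slo B N : Matrix (Fin 2) (Fin 2) ℝ)
    (hD : Dlam = !![1, 0; 0, lam])
    (hSup : Sup = !![1, (ℓ : ℝ); 0, 1])
    (hSlo : Slo = Supᵀ)
    (hB : B = !![(lam ^ 2)⁻¹, 0; 0, lam⁻¹])
    (hN : N = !![(lam ^ 2)⁻¹, 0; 0, (lam ^ 2)⁻¹])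
    (ψt ψ : (Fin 2 → ℝ) → ℂ)
    (hψ : ∀ ξ, ψ ξ =
      ψt ((!![1, 0; 0, lam⁻¹] ^ j).mulVec ((!![1, 0; -(ℓ : ℝ), 1]).mulVec ξ))) :
    (∀ (k : Fin 2 → ℤ) (ξ : Fin 2 → ℝ),
      (Real.sqrt |(Slo * B ^ j).det| : ℂ) * ψ ((Slo * B ^ j).mulVec ξ) *
          Complex.exp (-Complex.I *
            ((∑ i, (k i : ℝ) * (Slo * B ^ j).mulVec ξ i : ℝ) : ℂ)) =
      (Real.sqrt (lam ^ j) : ℂ) *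
        ((Real.sqrt |(N ^ j).det| : ℂ) * ψt ((N ^ j).mulVec ξ) *
          Complex.exp (-Complex.I *
            ((∑ i, (Dlam ^ j * Sup).mulVec (fun i' => (k i' : ℝ)) i *
              (N ^ j).mulVec ξ i : ℝ) : ℂ)))) ∧
    ∀ k : Fin 2 → ℤ, ∃ m : Fin 2 → ℤ,
      (Dlam ^ j * Sup).mulVec (fun i => (k i : ℝ)) = fun i => (m i : ℝ) := by
  have hlam_pos : 0 < lam := by rw [hlam]; exact_mod_cast zero_lt_one.trans hlamZ
  subst hD hSup hSlo hB hN
  rw [transpose_fin_two_of]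
  refine ⟨fun k ξ => ?_, fun k => ?_⟩
  · have hψ' : ∀ η, ψ ((!![1, 0; (ℓ : ℝ), 1] * !![1, 0; 0, lam] ^ j) *ᵥ η) = ψt η := fun η => by
      rw [hψ, mulVec_mulVec, mulVec_mulVec, shear_mul_diag_pow_inv_mul_cancel _ _ hlam_pos.ne',
        one_mulVec]
    rw [shear_mul_parabolic_pow_factor]
    refine (affineAtom_mul ψ ψt _ _ hψ' _ ξ).trans ?_
    rw [shear_mul_diag_pow_det, abs_of_pos (pow_pos hlam_pos j), shear_mul_diag_pow_transpose]
    rfl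
  · subst hlam
    rw [intCast_diag_pow_mul_shear, mulVec_intCast]
    exact ⟨_, rfl⟩
end

section
/- Let λ > 1, 0 < ε ≤ 1/2, ε₀ > 0, and j ≥ 1. Define ℓ_{λ^j} := ⌊λ^j + 1/2 - ε⌋ and suppose ε₀ < λ^{j-1}/2. Let s be a nonnegative integer satisfying s ≤ 1/2 + ε + ℓ_{λ^{j₀}} − λ^{2j+j₀}/(λ^{2j} + 2ε₀) for some j₀ ∈ {j−1, j, j+1}. Then s ∈ {0, 1}. -/
/-- Combinatorial core of Proposition 4.2(ii): a nonnegative integer `s`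
bounded by `1/2 + ε + ℓ_{λ^{j₀}} − λ^{2j+j₀}/(λ^{2j}+2ε₀)` for some
`j₀ ∈ {j-1, j, j+1}` must be `0` or `1`. -/
theorem seamline_overlap_index (lam ε ε₀ : ℝ) (hlam : 1 < lam)
    (hε : 0 < ε) (hε' : ε ≤ 1 / 2) (hε₀ : 0 < ε₀)
    (j : ℕ) (hj : 1 ≤ j) (hε₀' : ε₀ < lam ^ (j - 1) / 2)
    (j₀ : ℕ) (hj₀ : j₀ = j - 1 ∨ j₀ = j ∨ j₀ = j + 1)
    (s : ℕ)
    (hs : (s : ℝ) ≤ 1 / 2 + ε + (⌊lam ^ j₀ + 1 / 2 - ε⌋ : ℝ) -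
      lam ^ (2 * j + j₀) / (lam ^ (2 * j) + 2 * ε₀)) :
    s = 0 ∨ s = 1 := by
  have hlam0 : (0:ℝ) < lam := by linarith
  have hden : (0:ℝ) < lam ^ (2*j) + 2*ε₀ := by positivity
  have hfloor : (⌊lam ^ j₀ + 1/2 - ε⌋ : ℝ) ≤ lam ^ j₀ + 1/2 - ε := Int.floor_le _
  have hj₀le : j₀ ≤ j + 1 := by rcases hj₀ with h | h | h <;> omega
  have hpowle : lam ^ j₀ ≤ lam ^ (j+1) := pow_le_pow_right₀ hlam.le hj₀le
  have hmul : lam ^ (j-1) * lam ^ (j+1) = lam ^ (2*j) := by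
    rw [← pow_add]; congr 1; omega
  have hp1 : (0:ℝ) < lam ^ j₀ := pow_pos hlam0 _
  have h2 : 2*ε₀*lam^j₀ < lam^(2*j) := by
    calc 2*ε₀*lam^j₀ < lam^(j-1)*lam^j₀ := by
          apply mul_lt_mul_of_pos_right _ hp1; linarith
      _ ≤ lam^(j-1)*lam^(j+1) := by
          apply mul_le_mul_of_nonneg_left hpowle (pow_pos hlam0 _).le
      _ = lam^(2*j) := hmul
  have h1 : lam ^ j₀ - 1 < lam ^ (2*j+j₀) / (lam ^ (2*j) + 2*ε₀) := by
    rw [lt_div_iff₀ hden, pow_add]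
    nlinarith
  have hs2 : (s:ℝ) < 2 := by linarith
  have : s < 2 := by exact_mod_cast hs2
  omega
end
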